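/- arXiv:1111.1113 — 7 statements merged into one kernel-verified Lean document; each statement's English description precedes it below -/
import Mathlib

section
/- The matrix C(k,m,ρ,σ) is positive semidefinite; hence it is the covariance matrix of a centered multivariate Gaussian on ℝ^{k^m}. (This is the existence half of the theorem on conditional independent Gaussian trees: the k^m leaves of the regular (k,m) conditional independent Gaussian tree are jointly normal with covariance matrix C(k,m,ρ,σ).) -/
/-!
Let `B u` be the 0/1 matrix recording whether two leaves have a common ancestor `u` levels above
the leaves (so `B 0 = 1`). Then `C = σ² (B 0 + ρ ∑_{t<m} q^t (B (t+1) - B t))`: at two leaves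
whose lowest common ancestor has height `L` the sum telescopes to `q^(L-1)`.

For a vector `x`, `a u = xᵀ (B u) x` is the sum of the squared block sums of `x` at height `u`,
and Cauchy–Schwarz over the `k` children of a node gives `a (u+1) ≤ k a u`. Since
`q = ρ + (1 - ρ)/k` and `ρ ≤ 1`, this gives `q a (u+1) ≤ (1 - ρ) a u + ρ a (u+1)`; summing these
with weights `q^u` yields `xᵀ C x ≥ σ² q^m a m`, which is nonnegative because the lower bound
on `ρ` says exactly `q ≥ 0`.
-/

noncomputable def lcaHeight (k i j : ℕ) : ℕ := sInf {l | 1 ≤ l ∧ i / k ^ l = j / k ^ l}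

noncomputable def treeCov (k m : ℕ) (ρ σ : ℝ) : Matrix (Fin (k ^ m)) (Fin (k ^ m)) ℝ :=
  Matrix.of fun i j =>
    if (i : ℕ) = (j : ℕ) then σ ^ 2
    else σ ^ 2 * ρ * (1 / (k : ℝ) + (1 - 1 / (k : ℝ)) * ρ) ^ (lcaHeight k i j - 1)

def treeBlock (k m p r : ℕ) : Finset (Fin (k ^ m)) :=
  Finset.univ.filter fun i => (i : ℕ) / k ^ (m - p) = r

open Finset Matrix

section BlockMatrix

variable {ι κ : Type*} [Fintype ι] [DecidableEq κ]

def blockMatrix (g : ι → κ) : Matrix ι ι ℝ :=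
  Matrix.of fun i j => if g i = g j then 1 else 0

lemma dotProduct_blockMatrix_mulVec (g : ι → κ) (x : ι → ℝ) {t : Finset κ}
    (ht : ∀ i, g i ∈ t) :
    x ⬝ᵥ blockMatrix g *ᵥ x = ∑ r ∈ t, (∑ i with g i = r, x i) ^ 2 := by
  have hfiber : ∀ r ∈ t, (∑ i with g i = r, x i) ^ 2
      = ∑ i with g i = r, x i * ∑ j with g j = g i, x j := by
    intro r _
    rw [sq, sum_mul]
    refine sum_congr rfl fun i hi => ?_
    rw [(mem_filter.1 hi).2, mul_comm]
  rw [sum_congr rfl hfiber, sum_fiberwise_of_maps_to (fun i _ => ht i)]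
  simp [dotProduct, mulVec, blockMatrix, sum_filter, eq_comm]

lemma dotProduct_blockMatrix_mulVec_nonneg (g : ι → κ) (x : ι → ℝ) :
    0 ≤ x ⬝ᵥ blockMatrix g *ᵥ x := by
  rw [dotProduct_blockMatrix_mulVec g x fun i => mem_image_of_mem g (mem_univ i)]
  positivity

lemma dotProduct_blockMatrix_comp_mulVec_le {κ' : Type*} [DecidableEq κ'] (g : ι → κ)
    (h : κ → κ') {K : ℕ} (hK : ∀ s, #{r ∈ univ.image g | h r = s} ≤ K) (x : ι → ℝ) :
    x ⬝ᵥ blockMatrix (h ∘ g) *ᵥ x ≤ K * (x ⬝ᵥ blockMatrix g *ᵥ x) := by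
  set t := univ.image g
  have hg : ∀ i, g i ∈ t := fun i => mem_image_of_mem g (mem_univ i)
  have hh : ∀ r ∈ t, h r ∈ t.image h := fun r hr => mem_image_of_mem h hr
  set y : κ → ℝ := fun r => ∑ i with g i = r, x i
  have hsplit : ∀ s, ∑ i with h (g i) = s, x i = ∑ r ∈ t with h r = s, y r := by
    intro s
    rw [← sum_fiberwise_of_maps_to (s := {i | h (g i) = s}) (t := {r ∈ t | h r = s})
      (fun i hi => mem_filter.2 ⟨hg i, (mem_filter.1 hi).2⟩)]
    refine sum_congr rfl fun r hr => sum_congr ?_ fun _ _ => rfl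
    rw [filter_filter]
    refine filter_congr fun i _ => ?_
    constructor
    · exact And.right
    · intro hi; exact ⟨hi ▸ (mem_filter.1 hr).2, hi⟩
  calc x ⬝ᵥ blockMatrix (h ∘ g) *ᵥ x
      = ∑ s ∈ t.image h, (∑ r ∈ t with h r = s, y r) ^ 2 := by
        rw [dotProduct_blockMatrix_mulVec (h ∘ g) x (fun i => hh _ (hg i))]
        exact sum_congr rfl fun s _ => by rw [← hsplit]; rfl
    _ ≤ ∑ s ∈ t.image h, (K : ℝ) * ∑ r ∈ t with h r = s, y r ^ 2 := by
        gcongr with s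
        exact sq_sum_le_card_mul_sum_sq.trans
          (mul_le_mul_of_nonneg_right (by exact_mod_cast hK s) (by positivity))
    _ = K * (x ⬝ᵥ blockMatrix g *ᵥ x) := by
        rw [← mul_sum, sum_fiberwise_of_maps_to hh, dotProduct_blockMatrix_mulVec g x hg]

end BlockMatrix

lemma pow_mul_le_add_mul_sum_pow_mul_sub {K ρ q : ℝ} (hK : 0 < K) (hρ : ρ ≤ 1) (hq0 : 0 ≤ q)
    (hq : q = ρ + (1 - ρ) / K) {a : ℕ → ℝ} (ha : ∀ n, a (n + 1) ≤ K * a n) (m : ℕ) :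
    q ^ m * a m ≤ a 0 + ρ * ∑ t ∈ range m, q ^ t * (a (t + 1) - a t) := by
  induction m with
  | zero => simp
  | succ n ih =>
    have hstep : q * a (n + 1) ≤ (1 - ρ) * a n + ρ * a (n + 1) := by
      have : (1 - ρ) / K * a (n + 1) ≤ (1 - ρ) * a n := by
        rw [div_mul_eq_mul_div, div_le_iff₀ hK]
        linarith [mul_le_mul_of_nonneg_left (ha n) (sub_nonneg.2 hρ)]
      rw [hq]
      linarith
    calc q ^ (n + 1) * a (n + 1) = q ^ n * (q * a (n + 1)) := by ring
      _ ≤ q ^ n * ((1 - ρ) * a n + ρ * a (n + 1)) := by gcongr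
      _ = q ^ n * a n + ρ * (q ^ n * (a (n + 1) - a n)) := by ring
      _ ≤ a 0 + ρ * ∑ t ∈ range (n + 1), q ^ t * (a (t + 1) - a t) := by
        rw [sum_range_succ, mul_add]
        linarith

lemma lcaHeight_comm (k i j : ℕ) : lcaHeight k i j = lcaHeight k j i := by
  simp only [lcaHeight, eq_comm]

lemma div_pow_eq_div_pow_of_le {k i j l u : ℕ} (h : i / k ^ l = j / k ^ l) (hlu : l ≤ u) :
    i / k ^ u = j / k ^ u := by
  obtain ⟨d, rfl⟩ := Nat.exists_eq_add_of_le hlu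
  simp only [pow_add, ← Nat.div_div_eq_div_mul, h]

lemma div_pow_eq_div_pow_iff_lcaHeight_le {k m i j : ℕ} (hi : i < k ^ m) (hj : j < k ^ m)
    (hij : i ≠ j) (u : ℕ) : i / k ^ u = j / k ^ u ↔ lcaHeight k i j ≤ u := by
  have hm : m ≠ 0 := by rintro rfl; simp at hi hj; omega
  have hmem : m ∈ {l | 1 ≤ l ∧ i / k ^ l = j / k ^ l} :=
    ⟨by omega, by rw [Nat.div_eq_of_lt hi, Nat.div_eq_of_lt hj]⟩
  refine ⟨fun h => Nat.sInf_le ⟨Nat.one_le_iff_ne_zero.2 ?_, h⟩,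
    fun h => div_pow_eq_div_pow_of_le (Nat.sInf_mem ⟨m, hmem⟩).2 h⟩
  rintro rfl
  exact hij (by simpa using h)

lemma card_filter_div_eq_le {k : ℕ} (hk : 0 < k) (t : Finset ℕ) (s : ℕ) :
    #{r ∈ t | r / k = s} ≤ k := by
  calc #{r ∈ t | r / k = s} ≤ #(Ico (s * k) (s * k + k)) := by
        refine card_le_card fun r hr => ?_
        have := (Nat.div_eq_iff hk).1 (mem_filter.1 hr).2
        rw [mem_Ico]
        omega
    _ = k := by simp

def ancestorMatrix (k m u : ℕ) : Matrix (Fin (k ^ m)) (Fin (k ^ m)) ℝ :=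
  blockMatrix fun i : Fin (k ^ m) => (i : ℕ) / k ^ u

lemma dotProduct_ancestorMatrix_succ_mulVec_le {k : ℕ} (hk : 0 < k) (m u : ℕ)
    (x : Fin (k ^ m) → ℝ) :
    x ⬝ᵥ ancestorMatrix k m (u + 1) *ᵥ x ≤ k * (x ⬝ᵥ ancestorMatrix k m u *ᵥ x) := by
  have hcomp : ancestorMatrix k m (u + 1)
      = blockMatrix ((· / k) ∘ fun i : Fin (k ^ m) => (i : ℕ) / k ^ u) := by
    simp only [ancestorMatrix, Function.comp_def, Nat.div_div_eq_div_mul, pow_succ]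
  rw [hcomp]
  exact dotProduct_blockMatrix_comp_mulVec_le _ _ (card_filter_div_eq_le hk _) x

lemma ancestorMatrix_apply_of_ne {k m u : ℕ} {i j : Fin (k ^ m)} (hij : (i : ℕ) ≠ j) :
    ancestorMatrix k m u i j = if lcaHeight k i j ≤ u then 1 else 0 := by
  simp only [ancestorMatrix, blockMatrix, of_apply,
    div_pow_eq_div_pow_iff_lcaHeight_le i.2 j.2 hij]

@[simp]
lemma ancestorMatrix_apply_self (k m u : ℕ) (i : Fin (k ^ m)) :
    ancestorMatrix k m u i i = 1 := by
  simp [ancestorMatrix, blockMatrix]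

lemma treeCov_eq_sum (k m : ℕ) (ρ σ : ℝ) :
    treeCov k m ρ σ = σ ^ 2 • (ancestorMatrix k m 0 + ρ • ∑ t ∈ range m,
      (1 / (k : ℝ) + (1 - 1 / (k : ℝ)) * ρ) ^ t •
        (ancestorMatrix k m (t + 1) - ancestorMatrix k m t)) := by
  ext i j
  by_cases hij : (i : ℕ) = j
  · obtain rfl := Fin.ext hij
    simp [treeCov, Matrix.sum_apply]
  · have hL0 := (div_pow_eq_div_pow_iff_lcaHeight_le i.2 j.2 hij 0).not.1 (by simpa using hij)
    have hLm := (div_pow_eq_div_pow_iff_lcaHeight_le i.2 j.2 hij m).1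
      (by rw [Nat.div_eq_of_lt i.2, Nat.div_eq_of_lt j.2])
    simp only [treeCov, of_apply, if_neg hij, Matrix.add_apply, Matrix.smul_apply,
      Matrix.sum_apply, Matrix.sub_apply, ancestorMatrix_apply_of_ne hij]
    generalize lcaHeight k i j = L at *
    have hstep : ∀ t, ((if L ≤ t + 1 then (1 : ℝ) else 0) - if L ≤ t then 1 else 0)
        = if L - 1 = t then 1 else 0 := by
      intro t
      split_ifs <;> first | omega | norm_num
    simp only [if_neg hL0, hstep, smul_eq_mul, mul_ite, mul_one, mul_zero, sum_ite_eq, mem_range,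
      if_pos (show L - 1 < m by omega)]
    ring

lemma treeCov_isHermitian (k m : ℕ) (ρ σ : ℝ) : (treeCov k m ρ σ).IsHermitian :=
  IsHermitian.ext fun i j => by simp [treeCov, eq_comm, lcaHeight_comm]

lemma dotProduct_treeCov_mulVec (k m : ℕ) (ρ σ : ℝ) (x : Fin (k ^ m) → ℝ) :
    x ⬝ᵥ treeCov k m ρ σ *ᵥ x = σ ^ 2 * (x ⬝ᵥ ancestorMatrix k m 0 *ᵥ x + ρ * ∑ t ∈ range m,
      (1 / (k : ℝ) + (1 - 1 / (k : ℝ)) * ρ) ^ t *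
        (x ⬝ᵥ ancestorMatrix k m (t + 1) *ᵥ x - x ⬝ᵥ ancestorMatrix k m t *ᵥ x)) := by
  simp only [treeCov_eq_sum, add_mulVec, smul_mulVec, sum_mulVec, sub_mulVec, dotProduct_add,
    dotProduct_smul, dotProduct_sum, dotProduct_sub, smul_eq_mul]

theorem treeCov_posSemidef_general (k m : ℕ) (hk : 2 ≤ k) (σ ρ : ℝ)
    (hρ_lb : -(1 / ((k : ℝ) - 1)) < ρ) (hρ_ub : ρ < 1) :
    (treeCov k m ρ σ).PosSemidef := by
  have hk1 : (1 : ℝ) < k := by exact_mod_cast hk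
  set q := 1 / (k : ℝ) + (1 - 1 / (k : ℝ)) * ρ with hq_def
  have hq : q = ρ + (1 - ρ) / k := by rw [hq_def]; field_simp; ring
  have hq0 : 0 ≤ q := by
    have h := mul_lt_mul_of_pos_left hρ_lb (sub_pos.2 hk1)
    rw [mul_neg, mul_one_div_cancel (sub_pos.2 hk1).ne'] at h
    rw [show q = (1 + (k - 1) * ρ) / k by rw [hq_def]; field_simp]
    exact div_nonneg (by linarith) (by linarith)
  refine .of_dotProduct_mulVec_nonneg (treeCov_isHermitian k m ρ σ) fun x => ?_
  rw [star_trivial, dotProduct_treeCov_mulVec]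
  have hbound := pow_mul_le_add_mul_sum_pow_mul_sub (by linarith) hρ_ub.le hq0 hq
    (a := fun u => x ⬝ᵥ ancestorMatrix k m u *ᵥ x)
    (fun u => dotProduct_ancestorMatrix_succ_mulVec_le (by omega) m u x) m
  exact mul_nonneg (sq_nonneg σ)
    ((mul_nonneg (pow_nonneg hq0 m) (dotProduct_blockMatrix_mulVec_nonneg _ x)).trans hbound)

/-- The covariance matrix `C(k,m,ρ,σ)` of the regular `(k,m)` conditionally independent
Gaussian tree is positive semidefinite (hence it is the covariance matrix of a centered
multivariate Gaussian on `ℝ^(k^m)`). -/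
theorem treeCov_posSemidef (k m : ℕ) (hk : 2 ≤ k) (hm : 1 ≤ m) (σ ρ : ℝ) (hσ : 0 < σ)
    (hρ_lb : -(1 / ((k : ℝ) - 1)) < ρ) (hρ_ub : ρ < 1) :
    (treeCov k m ρ σ).PosSemidef :=
  treeCov_posSemidef_general k m hk σ ρ hρ_lb hρ_ub
end

section
/- Assume C = C(k,m,ρ,σ) is positive semidefinite and let μ = N(0, C) be the centered multivariate Gaussian on ℝ^{k^m} with covariance C. For every 0 ≤ p ≤ m and 0 ≤ r < k^p, the pushforward of μ under the map x ↦ Σ_{u ∈ J(p,r)} x_u is the one-dimensional Gaussian with mean 0 and variance σ_{(p)}² = σ²·(k + (k² − k)ρ)^{m−p}. In particular, the total portfolio Z = Σ_u X_u is normal with mean 0 and standard deviation σ_Z = σ·(k + (k² − k)ρ)^{m/2} (the main theorem on the regular Gaussian tree: every node at level p is N(0, σ²(k+(k²−k)ρ)^{m−p})). -/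
open MeasureTheory ProbabilityTheory
open scoped Classical

/-- The standard Gaussian measure on `ℝ^n`: product of `n` standard normal measures. -/
noncomputable def stdGaussianPi (n : ℕ) : Measure (Fin n → ℝ) :=
  Measure.pi fun _ => gaussianReal 0 1

/-- The multivariate Gaussian measure `N(μ, S)` on `ℝ^n` with mean vector `μ` and
(positive semidefinite) covariance matrix `S`, defined as the pushforward of the standard
Gaussian under `x ↦ μ + √S x`. (Junk value: the standard Gaussian if `S` is not psd.) -/
noncomputable def multivariateGaussian' {n : ℕ} (μ : Fin n → ℝ)
    (S : Matrix (Fin n) (Fin n) ℝ) : Measure (Fin n → ℝ) :=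
  if h : S.PosSemidef then (stdGaussianPi n).map (fun x => μ + (h.1.eigenvectorUnitary.1 * Matrix.diagonal ((RCLike.ofReal : ℝ → ℝ) ∘ (√·) ∘ h.1.eigenvalues) *
      (star h.1.eigenvectorUnitary : Matrix (Fin n) (Fin n) ℝ)).mulVec x)
  else stdGaussianPi n

instance stdGaussianPi.instIsProbabilityMeasure (n : ℕ) :
    IsProbabilityMeasure (stdGaussianPi n) := by
  unfold stdGaussianPi; infer_instance

instance multivariateGaussian'.instIsProbabilityMeasure {n : ℕ} (μ : Fin n → ℝ)
    (S : Matrix (Fin n) (Fin n) ℝ) :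
    IsProbabilityMeasure (multivariateGaussian' μ S) := by
  unfold multivariateGaussian'
  split
  · rename_i h
    refine Measure.isProbabilityMeasure_map ?_
    exact (Measurable.aemeasurable (by
      have : Continuous fun x : Fin n → ℝ => μ + (h.1.eigenvectorUnitary.1 * Matrix.diagonal ((RCLike.ofReal : ℝ → ℝ) ∘ (√·) ∘ h.1.eigenvalues) *
      (star h.1.eigenvectorUnitary : Matrix (Fin n) (Fin n) ℝ)).mulVec x :=
        continuous_const.add (continuous_const.matrix_mulVec continuous_id)
      exact this.measurable))
  · infer_instance

/-!
If `R` is a symmetric square root of `C`, then `N(0, C)` is the law of `R X` with `X` standard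
normal, so a block sum `∑_{u ∈ J} (R X)_u` is a linear form in independent standard normals, hence
centred normal with variance `∑_{u,v ∈ J} C_uv`. To evaluate this block sum fix a leaf `u`: the
leaves meeting `u` exactly at height `l` number `k^l - k^(l-1)` and each contributes
`σ²ρ q^(l-1)`. Since `k q = 1 + (k-1)ρ`, the row sum of `u` over its ancestor block at height `l`
is `σ²(1 + (k-1)ρ)^l`; the `k^(m-p)` rows of `J(p,r)` then give `σ²(k + (k²-k)ρ)^(m-p)`.
-/

open Matrix Finset

section Gaussian

variable {ι κ : Type*} [Fintype ι]

lemma map_pi_gaussianReal_sum_mul (a : ι → ℝ) :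
    (Measure.pi fun _ : ι => gaussianReal 0 1).map (fun x => ∑ i, a i * x i)
      = gaussianReal 0 (∑ i, a i ^ 2).toNNReal := by
  set L := innerSL ℝ (WithLp.toLp 2 a : EuclideanSpace ℝ ι)
  have hL : (fun x : ι → ℝ => ∑ i, a i * x i) = L ∘ WithLp.toLp 2 := by
    ext x
    simp [L, EuclideanSpace.inner_eq_star_dotProduct, dotProduct, mul_comm]
  rw [hL, ← Measure.map_map L.continuous.measurable (by fun_prop), map_pi_eq_stdGaussian,
    IsGaussian.map_eq_gaussianReal, integral_strongDual_stdGaussian, variance_dual_stdGaussian,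
    innerSL_apply_norm, EuclideanSpace.real_norm_sq_eq]

lemma map_pi_gaussianReal_sum_mulVec (R : Matrix κ ι ℝ) (J : Finset κ) :
    (Measure.pi fun _ : ι => gaussianReal 0 1).map (fun x => ∑ u ∈ J, (R *ᵥ x) u)
      = gaussianReal 0 (∑ u ∈ J, ∑ v ∈ J, (R * Rᵀ) u v).toNNReal := by
  have hsum : (fun x : ι → ℝ => ∑ u ∈ J, (R *ᵥ x) u)
      = fun x => ∑ i, (∑ u ∈ J, R u i) * x i := by
    ext x
    simp only [mulVec, dotProduct, sum_mul]
    exact sum_comm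
  have hvar : ∑ i, (∑ u ∈ J, R u i) ^ 2 = ∑ u ∈ J, ∑ v ∈ J, (R * Rᵀ) u v := by
    simp only [sq, sum_mul_sum, mul_apply, transpose_apply]
    rw [sum_comm]
    exact sum_congr rfl fun u _ => sum_comm
  rw [hsum, map_pi_gaussianReal_sum_mul, hvar]

end Gaussian

section SquareRoot

variable {n : Type*} [Fintype n] [DecidableEq n]

lemma Matrix.transpose_cfc (f : ℝ → ℝ) (S : Matrix n n ℝ) : (cfc f S)ᵀ = cfc f S := by
  rw [← conjTranspose_eq_transpose_of_trivial]
  exact IsSelfAdjoint.cfc.star_eq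

open scoped MatrixOrder in
lemma Matrix.PosSemidef.cfc_sqrt_mul_self {S : Matrix n n ℝ} (hS : S.PosSemidef) :
    cfc Real.sqrt S * cfc Real.sqrt S = S := by
  have hspec : ∀ x ∈ spectrum ℝ S, Real.sqrt x * Real.sqrt x = x := fun x hx =>
    Real.mul_self_sqrt (spectrum_nonneg_of_nonneg hS.nonneg hx)
  rw [← cfc_mul Real.sqrt Real.sqrt S, cfc_congr hspec, cfc_id' ℝ S hS.1.isSelfAdjoint]

end SquareRoot

section MultivariateGaussian

variable {n : ℕ} {S : Matrix (Fin n) (Fin n) ℝ}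

lemma multivariateGaussian'_zero_eq_map (hS : S.PosSemidef) :
    multivariateGaussian' 0 S = (stdGaussianPi n).map (fun x => cfc Real.sqrt S *ᵥ x) := by
  rw [multivariateGaussian', dif_pos hS, hS.1.cfc_eq, IsHermitian.cfc,
    Unitary.conjStarAlgAut_apply]
  simp only [zero_add]

lemma map_sum_multivariateGaussian' (hS : S.PosSemidef) (J : Finset (Fin n)) :
    (multivariateGaussian' 0 S).map (fun x => ∑ u ∈ J, x u)
      = gaussianReal 0 (∑ u ∈ J, ∑ v ∈ J, S u v).toNNReal := by
  have hR : cfc Real.sqrt S * (cfc Real.sqrt S)ᵀ = S := by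
    rw [transpose_cfc, hS.cfc_sqrt_mul_self]
  rw [multivariateGaussian'_zero_eq_map hS, Measure.map_map (by fun_prop) (by fun_prop),
    stdGaussianPi]
  exact (map_pi_gaussianReal_sum_mulVec _ J).trans (by rw [hR])

end MultivariateGaussian

section TreeCombinatorics

lemma Nat.div_pow_eq_div_pow_of_le {k u v a b : ℕ} (h : u / k ^ a = v / k ^ a) (hab : a ≤ b) :
    u / k ^ b = v / k ^ b := by
  rw [← Nat.add_sub_cancel' hab, pow_add, ← Nat.div_div_eq_div_mul, ← Nat.div_div_eq_div_mul, h]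

lemma Fin.card_filter_div_eq {n A c : ℕ} (hA : 0 < A) (h : A * (c + 1) ≤ n) :
    #{v : Fin n | (v : ℕ) / A = c} = A := by
  have hlt : ∀ x ∈ Ico (c * A) (c * A + A), x < n := fun x hx => by
    rw [mem_Ico] at hx
    nlinarith
  have hblock : ({v : Fin n | (v : ℕ) / A = c} : Finset (Fin n))
      = (Ico (c * A) (c * A + A)).attachFin hlt := by
    ext v
    rw [mem_filter, mem_attachFin, mem_Ico, Nat.div_eq_iff hA]
    simp only [mem_univ, true_and]
    omega
  rw [hblock, card_attachFin, Nat.card_Ico, Nat.add_sub_cancel_left]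

lemma lcaHeight_eq_of_div_eq {k u v l : ℕ} (hl : 1 ≤ l) (h : u / k ^ l = v / k ^ l)
    (hne : u / k ^ (l - 1) ≠ v / k ^ (l - 1)) : lcaHeight k u v = l := by
  refine le_antisymm (Nat.sInf_le ⟨hl, h⟩) (le_csInf ⟨l, hl, h⟩ fun l' ⟨_, h'⟩ => ?_)
  by_contra! hlt
  exact hne (Nat.div_pow_eq_div_pow_of_le h' (by omega))

-- Indexed by the height `l` above the leaves, whereas `treeBlock` is indexed by the level.
def ancestorBlock (k m l : ℕ) (u : Fin (k ^ m)) : Finset (Fin (k ^ m)) :=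
  {v : Fin (k ^ m) | (v : ℕ) / k ^ l = (u : ℕ) / k ^ l}

variable {k m : ℕ}

lemma ancestorBlock_zero (u : Fin (k ^ m)) : ancestorBlock k m 0 u = {u} := by
  ext v
  simp [ancestorBlock, Fin.ext_iff]

lemma ancestorBlock_mono (u : Fin (k ^ m)) {l l' : ℕ} (hl : l ≤ l') :
    ancestorBlock k m l u ⊆ ancestorBlock k m l' u := fun v hv => by
  simp only [ancestorBlock, mem_filter, mem_univ, true_and] at hv ⊢
  exact Nat.div_pow_eq_div_pow_of_le hv hl

lemma card_ancestorBlock (hk : 0 < k) {l : ℕ} (hl : l ≤ m) (u : Fin (k ^ m)) :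
    #(ancestorBlock k m l u) = k ^ l := by
  refine Fin.card_filter_div_eq (pow_pos hk l) ?_
  have hsplit : k ^ m = k ^ l * k ^ (m - l) := by rw [← pow_add, Nat.add_sub_cancel' hl]
  have hu : (u : ℕ) / k ^ l < k ^ (m - l) := Nat.div_lt_of_lt_mul (hsplit ▸ u.isLt)
  calc k ^ l * ((u : ℕ) / k ^ l + 1) ≤ k ^ l * k ^ (m - l) := Nat.mul_le_mul_left _ hu
    _ = k ^ m := hsplit.symm

lemma treeCov_apply_of_mem_sdiff {ρ σ : ℝ} {l : ℕ} {u v : Fin (k ^ m)}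
    (hv : v ∈ ancestorBlock k m (l + 1) u \ ancestorBlock k m l u) :
    treeCov k m ρ σ u v = σ ^ 2 * ρ * (1 / (k : ℝ) + (1 - 1 / (k : ℝ)) * ρ) ^ l := by
  simp only [ancestorBlock, mem_sdiff, mem_filter, mem_univ, true_and] at hv
  have hne : (u : ℕ) ≠ v := fun h => hv.2 (by rw [h])
  rw [treeCov, of_apply, if_neg hne,
    lcaHeight_eq_of_div_eq (Nat.le_add_left 1 l) hv.1.symm (fun h => hv.2 h.symm),
    Nat.add_sub_cancel]

lemma sum_ancestorBlock_treeCov (hk : 0 < k) (ρ σ : ℝ) (u : Fin (k ^ m)) {l : ℕ} (hl : l ≤ m) :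
    ∑ v ∈ ancestorBlock k m l u, treeCov k m ρ σ u v = σ ^ 2 * (1 + ((k : ℝ) - 1) * ρ) ^ l := by
  induction l with
  | zero => simp [ancestorBlock_zero, treeCov]
  | succ l ih =>
    have hsub := ancestorBlock_mono u (Nat.le_succ l)
    have hcard := card_sdiff_add_card_eq_card hsub
    rw [card_ancestorBlock hk hl, card_ancestorBlock hk (by omega)] at hcard
    have hshell : ((#(ancestorBlock k m (l + 1) u \ ancestorBlock k m l u) : ℕ) : ℝ)
        = (k : ℝ) ^ (l + 1) - (k : ℝ) ^ l := by
      rw [eq_sub_iff_add_eq]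
      exact_mod_cast hcard
    have hkq : (k : ℝ) ^ l * (1 / (k : ℝ) + (1 - 1 / (k : ℝ)) * ρ) ^ l
        = (1 + ((k : ℝ) - 1) * ρ) ^ l := by
      rw [← mul_pow]
      congr 1
      field_simp
    rw [← sum_sdiff hsub, sum_congr rfl fun v hv => treeCov_apply_of_mem_sdiff hv, sum_const,
      nsmul_eq_mul, ih (by omega), hshell]
    linear_combination ((k - 1) * ρ * σ ^ 2 : ℝ) * hkq

lemma sum_treeBlock_treeCov (hk : 0 < k) (ρ σ : ℝ) {p r : ℕ} (hp : p ≤ m) (hr : r < k ^ p) :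
    ∑ u ∈ treeBlock k m p r, ∑ v ∈ treeBlock k m p r, treeCov k m ρ σ u v
      = σ ^ 2 * ((k : ℝ) + ((k : ℝ) ^ 2 - (k : ℝ)) * ρ) ^ (m - p) := by
  have hblock : ∀ u ∈ treeBlock k m p r, treeBlock k m p r = ancestorBlock k m (m - p) u := by
    intro u hu
    simp only [treeBlock, mem_filter, mem_univ, true_and] at hu
    simp [treeBlock, ancestorBlock, hu]
  have hcard : #(treeBlock k m p r) = k ^ (m - p) := by
    refine Fin.card_filter_div_eq (pow_pos hk _) ?_
    calc k ^ (m - p) * (r + 1) ≤ k ^ (m - p) * k ^ p := Nat.mul_le_mul_left _ hr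
      _ = k ^ m := by rw [← pow_add, Nat.sub_add_cancel hp]
  rw [sum_congr rfl fun u hu =>
      (hblock u hu).symm ▸ sum_ancestorBlock_treeCov hk ρ σ u (Nat.sub_le m p),
    sum_const, hcard, nsmul_eq_mul, Nat.cast_pow,
    show (k : ℝ) + ((k : ℝ) ^ 2 - k) * ρ = k * (1 + ((k : ℝ) - 1) * ρ) by ring, mul_pow]
  ring

end TreeCombinatorics

theorem gaussianTree_node_distribution_general (k m : ℕ) (hk : 2 ≤ k) (σ ρ : ℝ)
    (hpsd : (treeCov k m ρ σ).PosSemidef)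
    (p r : ℕ) (hp : p ≤ m) (hr : r < k ^ p) :
    (multivariateGaussian' 0 (treeCov k m ρ σ)).map
        (fun x => ∑ u ∈ treeBlock k m p r, x u)
      = gaussianReal 0
          (σ ^ 2 * ((k : ℝ) + ((k : ℝ) ^ 2 - (k : ℝ)) * ρ) ^ (m - p)).toNNReal := by
  rw [map_sum_multivariateGaussian' hpsd, sum_treeBlock_treeCov (by omega) ρ σ hp hr]

/-- Main theorem on the regular Gaussian tree: under the centered multivariate Gaussian with
covariance `C(k,m,ρ,σ)`, each node at level `p` (the sum of the leaves of the block
`J(p,r)`) is normal with mean `0` and variance `σ_{(p)}² = σ²·(k + (k² - k)ρ)^(m-p)`.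
In particular (`p = 0`) the total portfolio is `N(0, σ²·(k + (k² - k)ρ)^m)`. -/
theorem gaussianTree_node_distribution (k m : ℕ) (hk : 2 ≤ k) (hm : 1 ≤ m) (σ ρ : ℝ)
    (hσ : 0 < σ) (hρ_lb : -(1 / ((k : ℝ) - 1)) < ρ) (hρ_ub : ρ < 1)
    (hpsd : (treeCov k m ρ σ).PosSemidef)
    (p r : ℕ) (hp : p ≤ m) (hr : r < k ^ p) :
    (multivariateGaussian' 0 (treeCov k m ρ σ)).map
        (fun x => ∑ u ∈ treeBlock k m p r, x u)
      = gaussianReal 0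
          (σ ^ 2 * ((k : ℝ) + ((k : ℝ) ^ 2 - (k : ℝ)) * ρ) ^ (m - p)).toNNReal :=
  gaussianTree_node_distribution_general k m hk σ ρ hpsd p r hp hr
end

section
/- Let D be any symmetric k^m × k^m real matrix satisfying: (i) D_ii = σ² for every leaf i; (ii) for every 0 ≤ p ≤ m − 1 and every pair of distinct sibling nodes at level p + 1, i.e. indices 0 ≤ r ≠ r' < k^{p+1} with ⌊r/k⌋ = ⌊r'/k⌋, one has Σ_{u ∈ J(p+1,r)} Σ_{v ∈ J(p+1,r')} D_{uv} = ρ · Σ_{u ∈ J(p+1,r)} Σ_{v ∈ J(p+1,r)} D_{uv}; and (iii) for every 1 ≤ p ≤ m − 1, every 0 ≤ r < k^p with J = J(p,r), every leaf i ∈ J and every leaf j ∉ J: D_{ij} · (Σ_{u ∈ J} Σ_{v ∈ J} D_{uv}) = (Σ_{u ∈ J} D_{iu}) · (Σ_{u ∈ J} D_{ju}). Then D = C(k,m,ρ,σ). (This is the uniqueness half of the theorem on conditional independent Gaussian trees: condition (i) fixes the leaf marginals, condition (ii) expresses that siblings are tied by the equicorrelation Gaussian copula of parameter ρ, and condition (iii)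 expresses the conditional independence requirements; together they determine the covariance matrix uniquely.) -/
open MeasureTheory ProbabilityTheory
open scoped Classical

private lemma lca_eq {k t i j : ℕ} (h1 : i / k ^ (t + 1) = j / k ^ (t + 1))
    (h2 : i / k ^ t ≠ j / k ^ t) : lcaHeight k i j = t + 1 := by
  have hmem : t + 1 ∈ {l | 1 ≤ l ∧ i / k ^ l = j / k ^ l} := ⟨Nat.le_add_left 1 t, h1⟩
  refine le_antisymm (Nat.sInf_le hmem) ?_
  refine le_csInf ⟨t + 1, hmem⟩ ?_
  intro l hl
  obtain ⟨hl1, hl2⟩ := hl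
  by_contra hcon
  push_neg at hcon
  have hle : l ≤ t := by omega
  apply h2
  have hpow : k ^ t = k ^ l * k ^ (t - l) := by rw [← pow_add, Nat.add_sub_cancel' hle]
  rw [hpow, ← Nat.div_div_eq_div_mul, ← Nat.div_div_eq_div_mul, hl2]

private lemma treeBlock_eq (k m t c : ℕ) (ht : t ≤ m) :
    treeBlock k m (m - t) c
      = Finset.univ.filter fun u : Fin (k ^ m) => (u : ℕ) / k ^ t = c := by
  unfold treeBlock
  rw [Nat.sub_sub_self ht]

private lemma div_lt_pow_sub (k m t : ℕ) (ht : t ≤ m) (i : Fin (k ^ m)) :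
    (i : ℕ) / k ^ t < k ^ (m - t) := by
  apply Nat.div_lt_of_lt_mul
  calc (i : ℕ) < k ^ m := i.isLt
  _ = k ^ t * k ^ (m - t) := by rw [← pow_add, Nat.add_sub_cancel' ht]

private lemma filter_div_card (k m t : ℕ) (hk : 0 < k) (ht : t ≤ m) (i : Fin (k ^ m)) :
    (Finset.univ.filter fun u : Fin (k ^ m) => (u : ℕ) / k ^ t = (i : ℕ) / k ^ t).card
      = k ^ t := by
  have hKpos : 0 < k ^ t := pow_pos hk t
  set K := k ^ t with hK
  set c := (i : ℕ) / K with hc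
  have hclt : c < k ^ (m - t) := div_lt_pow_sub k m t ht i
  have hpow : k ^ (m - t) * K = k ^ m := by rw [hK, ← pow_add, Nat.sub_add_cancel ht]
  have hub : c * K + K ≤ k ^ m := by
    calc c * K + K = (c + 1) * K := by ring
    _ ≤ k ^ (m - t) * K := mul_le_mul_left hclt K
    _ = k ^ m := hpow
  have hbij : (Finset.univ.filter fun u : Fin (k ^ m) => (u : ℕ) / k ^ t = (i : ℕ) / k ^ t).card
      = (Finset.range K).card := by
    refine Finset.card_bij' (fun u _ => (u : ℕ) - c * K)
      (fun x hx => (⟨c * K + x, ?_⟩ : Fin (k ^ m))) ?_ ?_ ?_ ?_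
    · simp only [Finset.mem_range] at hx
      omega
    · intro a ha
      simp only [Finset.mem_filter, Finset.mem_univ, true_and] at ha
      have hmod := Nat.mod_lt (a : ℕ) hKpos
      have hdm : c * K + (a : ℕ) % K = (a : ℕ) := by
        have h := Nat.div_add_mod (a : ℕ) K
        rw [ha, mul_comm K c] at h
        exact h
      simp only [Finset.mem_range]
      omega
    · intro x hx
      simp only [Finset.mem_range] at hx
      simp only [Finset.mem_filter, Finset.mem_univ, true_and]
      show (c * K + x) / K = c
      rw [Nat.add_comm, Nat.add_mul_div_right _ _ hKpos, Nat.div_eq_of_lt hx, Nat.zero_add]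
    · intro a ha
      simp only [Finset.mem_filter, Finset.mem_univ, true_and] at ha
      have hdm : c * K + (a : ℕ) % K = (a : ℕ) := by
        have h := Nat.div_add_mod (a : ℕ) K
        rw [ha, mul_comm K c] at h
        exact h
      apply Fin.ext
      show c * K + ((a : ℕ) - c * K) = (a : ℕ)
      omega
    · intro x hx
      simp only [Finset.mem_range] at hx
      show c * K + x - c * K = x
      omega
  rw [hbij, Finset.card_range]

/-- Uniqueness half of the theorem on conditionally independent Gaussian trees: a symmetric
`k^m × k^m` matrix `D` whose leaves have variance `σ²` (i), whose sibling subtree blocks are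
tied by the equicorrelation relation of parameter `ρ` (ii), and which satisfies the conditional
independence identities (iii), must equal `C(k,m,ρ,σ)`. -/
theorem treeCov_unique (k m : ℕ) (hk : 2 ≤ k) (hm : 1 ≤ m) (σ ρ : ℝ) (hσ : 0 < σ)
    (hρ_lb : -(1 / ((k : ℝ) - 1)) < ρ) (hρ_ub : ρ < 1)
    (D : Matrix (Fin (k ^ m)) (Fin (k ^ m)) ℝ) (hsymm : D.IsSymm)
    (hdiag : ∀ i, D i i = σ ^ 2)
    (hcopula : ∀ p < m, ∀ r r' : ℕ, r < k ^ (p + 1) → r' < k ^ (p + 1) → r ≠ r' →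
      r / k = r' / k →
      ∑ u ∈ treeBlock k m (p + 1) r, ∑ v ∈ treeBlock k m (p + 1) r', D u v
        = ρ * ∑ u ∈ treeBlock k m (p + 1) r, ∑ v ∈ treeBlock k m (p + 1) r, D u v)
    (hci : ∀ p, 1 ≤ p → p ≤ m - 1 → ∀ r < k ^ p,
      ∀ i ∈ treeBlock k m p r, ∀ j ∉ treeBlock k m p r,
      D i j * (∑ u ∈ treeBlock k m p r, ∑ v ∈ treeBlock k m p r, D u v)
        = (∑ u ∈ treeBlock k m p r, D i u) * (∑ u ∈ treeBlock k m p r, D j u)) :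
    D = treeCov k m ρ σ := by
  have hk0 : 0 < k := by omega
  have hk2R : (2 : ℝ) ≤ (k : ℝ) := by exact_mod_cast hk
  have hkne : (k : ℝ) ≠ 0 := by positivity
  have hk1pos : (0 : ℝ) < (k : ℝ) - 1 := by linarith
  set Q : ℝ := 1 + ((k : ℝ) - 1) * ρ with hQ
  have hQpos : 0 < Q := by
    have h := mul_lt_mul_of_pos_left hρ_lb hk1pos
    rw [mul_neg, mul_one_div, div_self (ne_of_gt hk1pos)] at h
    rw [hQ]; linarith
  have hq : 1 / (k : ℝ) + (1 - 1 / (k : ℝ)) * ρ = Q / k := by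
    rw [hQ]; field_simp
  have hσ2 : (0 : ℝ) < σ ^ 2 := by positivity
  have key : ∀ t, t ≤ m →
      (∀ i j : Fin (k ^ m), (i : ℕ) / k ^ t = (j : ℕ) / k ^ t → D i j = treeCov k m ρ σ i j)
      ∧ (∀ i : Fin (k ^ m),
          ∑ u ∈ Finset.univ.filter (fun u : Fin (k ^ m) => (u : ℕ) / k ^ t = (i : ℕ) / k ^ t),
            D i u = σ ^ 2 * Q ^ t) := by
    intro t
    induction t with
    | zero =>
      intro _
      constructor
      · intro i j hij
        simp only [pow_zero, Nat.div_one] at hij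
        have hij' : i = j := Fin.ext hij
        subst hij'
        rw [hdiag]
        simp [treeCov]
      · intro i
        have hsing : (Finset.univ.filter
            fun u : Fin (k ^ m) => (u : ℕ) / k ^ 0 = (i : ℕ) / k ^ 0) = {i} := by
          ext u
          simp [Fin.ext_iff, Nat.div_one]
        rw [hsing]
        simp [hdiag]
    | succ t ih =>
      intro ht1
      have ht : t ≤ m := Nat.le_of_succ_le ht1
      obtain ⟨ihH, ihR⟩ := ih ht
      have hKpos : 0 < k ^ t := pow_pos hk0 t
      have hKR : (0 : ℝ) < (k : ℝ) ^ t := by positivity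
      have hdd : ∀ x : ℕ, x / k ^ t / k = x / k ^ (t + 1) := fun x => by
        rw [Nat.div_div_eq_div_mul, ← pow_succ]
      have rowsum : ∀ u : Fin (k ^ m), ∀ c, (u : ℕ) / k ^ t = c →
          ∑ w ∈ treeBlock k m (m - t) c, D u w = σ ^ 2 * Q ^ t := by
        intro u c hc
        rw [treeBlock_eq k m t c ht, ← hc]
        exact ihR u
      have blocksum : ∀ u0 : Fin (k ^ m),
          ∑ u ∈ treeBlock k m (m - t) ((u0 : ℕ) / k ^ t),
            ∑ v ∈ treeBlock k m (m - t) ((u0 : ℕ) / k ^ t), D u v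
            = (k : ℝ) ^ t * (σ ^ 2 * Q ^ t) := by
        intro u0
        have hrows : ∀ u ∈ treeBlock k m (m - t) ((u0 : ℕ) / k ^ t),
            ∑ v ∈ treeBlock k m (m - t) ((u0 : ℕ) / k ^ t), D u v = σ ^ 2 * Q ^ t := by
          intro u hu
          rw [treeBlock_eq k m t _ ht] at hu
          simp only [Finset.mem_filter, Finset.mem_univ, true_and] at hu
          exact rowsum u _ hu
        rw [Finset.sum_congr rfl hrows, Finset.sum_const, treeBlock_eq k m t _ ht,
          filter_div_card k m t hk0 ht u0, nsmul_eq_mul]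
        push_cast
        ring
      have stepA : ∀ i j : Fin (k ^ m), (i : ℕ) / k ^ (t + 1) = (j : ℕ) / k ^ (t + 1) →
          (i : ℕ) / k ^ t ≠ (j : ℕ) / k ^ t →
          D i j = σ ^ 2 * ρ * (Q / (k : ℝ)) ^ t := by
        intro i j h1 h2
        have claim : ∀ a b u : Fin (k ^ m), (u : ℕ) / k ^ t = (a : ℕ) / k ^ t →
            (b : ℕ) / k ^ t ≠ (a : ℕ) / k ^ t → D u b = D a b := by
          intro a b u hu hb
          rcases Nat.eq_zero_or_pos t with ht0 | htpos
          · subst ht0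
            simp only [pow_zero, Nat.div_one] at hu
            have : u = a := Fin.ext hu
            rw [this]
          · have hp1 : 1 ≤ m - t := by omega
            have hp2 : m - t ≤ m - 1 := by omega
            have hr : (a : ℕ) / k ^ t < k ^ (m - t) := div_lt_pow_sub k m t ht a
            have hmem_a : a ∈ treeBlock k m (m - t) ((a : ℕ) / k ^ t) := by
              rw [treeBlock_eq k m t _ ht]; simp
            have hmem_u : u ∈ treeBlock k m (m - t) ((a : ℕ) / k ^ t) := by
              rw [treeBlock_eq k m t _ ht]; simp [hu]
            have hnot_b : b ∉ treeBlock k m (m - t) ((a : ℕ) / k ^ t) := by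
              rw [treeBlock_eq k m t _ ht]; simp [hb]
            have e1 := hci (m - t) hp1 hp2 ((a : ℕ) / k ^ t) hr u hmem_u b hnot_b
            have e2 := hci (m - t) hp1 hp2 ((a : ℕ) / k ^ t) hr a hmem_a b hnot_b
            rw [blocksum a, rowsum u _ hu] at e1
            rw [blocksum a, rowsum a _ rfl] at e2
            have hS : ((k : ℝ) ^ t * (σ ^ 2 * Q ^ t)) ≠ 0 := by positivity
            exact mul_right_cancel₀ hS (e1.trans e2.symm)
        have hconst : ∀ u v : Fin (k ^ m), (u : ℕ) / k ^ t = (i : ℕ) / k ^ t →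
            (v : ℕ) / k ^ t = (j : ℕ) / k ^ t → D u v = D i j := by
          intro u v hu hv
          have hvne : (v : ℕ) / k ^ t ≠ (i : ℕ) / k ^ t := by rw [hv]; exact Ne.symm h2
          calc D u v = D i v := claim i v u hu hvne
          _ = D v i := hsymm.apply v i
          _ = D j i := claim j i v hv h2
          _ = D i j := hsymm.apply i j
        have hp : m - t - 1 < m := by omega
        have hpp : m - t - 1 + 1 = m - t := by omega
        have hri : (i : ℕ) / k ^ t < k ^ (m - t) := div_lt_pow_sub k m t ht i
        have hrj : (j : ℕ) / k ^ t < k ^ (m - t) := div_lt_pow_sub k m t ht j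
        have hdivdiv : (i : ℕ) / k ^ t / k = (j : ℕ) / k ^ t / k := by
          rw [hdd, hdd]; exact h1
        have e3 := hcopula (m - t - 1) hp ((i : ℕ) / k ^ t) ((j : ℕ) / k ^ t)
          (by rw [hpp]; exact hri) (by rw [hpp]; exact hrj) h2 hdivdiv
        rw [hpp] at e3
        have lhs_eq : ∑ u ∈ treeBlock k m (m - t) ((i : ℕ) / k ^ t),
            ∑ v ∈ treeBlock k m (m - t) ((j : ℕ) / k ^ t), D u v
            = ((k : ℝ) ^ t * (k : ℝ) ^ t) * D i j := by
          have hinner : ∀ u ∈ treeBlock k m (m - t) ((i : ℕ) / k ^ t),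
              ∑ v ∈ treeBlock k m (m - t) ((j : ℕ) / k ^ t), D u v
                = (k : ℝ) ^ t * D i j := by
            intro u hu
            rw [treeBlock_eq k m t _ ht] at hu
            simp only [Finset.mem_filter, Finset.mem_univ, true_and] at hu
            have hinner2 : ∀ v ∈ treeBlock k m (m - t) ((j : ℕ) / k ^ t), D u v = D i j := by
              intro v hv
              rw [treeBlock_eq k m t _ ht] at hv
              simp only [Finset.mem_filter, Finset.mem_univ, true_and] at hv
              exact hconst u v hu hv
            rw [Finset.sum_congr rfl hinner2, Finset.sum_const, treeBlock_eq k m t _ ht,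
              filter_div_card k m t hk0 ht j, nsmul_eq_mul]
            push_cast
            ring
          rw [Finset.sum_congr rfl hinner, Finset.sum_const, treeBlock_eq k m t _ ht,
            filter_div_card k m t hk0 ht i, nsmul_eq_mul]
          push_cast
          ring
        rw [lhs_eq, blocksum i] at e3
        have e4 : (k : ℝ) ^ t * ((k : ℝ) ^ t * D i j)
            = (k : ℝ) ^ t * (ρ * (σ ^ 2 * Q ^ t)) := by linear_combination e3
        have e5 := mul_left_cancel₀ (ne_of_gt hKR) e4
        rw [div_pow]
        field_simp
        linear_combination e5
      refine ⟨?_, ?_⟩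
      · intro i j h1
        by_cases hij : (i : ℕ) / k ^ t = (j : ℕ) / k ^ t
        · exact ihH i j hij
        · have hne : (i : ℕ) ≠ (j : ℕ) := fun h => hij (by rw [h])
          rw [stepA i j h1 hij, treeCov]
          simp only [Matrix.of_apply, if_neg hne]
          rw [lca_eq h1 hij, hq]
          simp
      · intro i
        set B := Finset.univ.filter
          (fun u : Fin (k ^ m) => (u : ℕ) / k ^ (t + 1) = (i : ℕ) / k ^ (t + 1)) with hB
        have hsplit := Finset.sum_filter_add_sum_filter_not B
          (fun u : Fin (k ^ m) => (u : ℕ) / k ^ t = (i : ℕ) / k ^ t) (fun u => D i u)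
        have hBP : B.filter (fun u : Fin (k ^ m) => (u : ℕ) / k ^ t = (i : ℕ) / k ^ t)
            = Finset.univ.filter
              (fun u : Fin (k ^ m) => (u : ℕ) / k ^ t = (i : ℕ) / k ^ t) := by
          ext u
          simp only [hB, Finset.mem_filter, Finset.mem_univ, true_and, and_iff_right_iff_imp]
          intro hu
          rw [← hdd, ← hdd, hu]
        have hsum1 : ∑ u ∈ B.filter (fun u : Fin (k ^ m) => (u : ℕ) / k ^ t = (i : ℕ) / k ^ t), D i u
            = σ ^ 2 * Q ^ t := by
          rw [hBP]; exact ihR i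
        have hcard1 : B.card = k ^ (t + 1) := filter_div_card k m (t + 1) hk0 ht1 i
        have hcard2 : (B.filter (fun u : Fin (k ^ m) => (u : ℕ) / k ^ t = (i : ℕ) / k ^ t)).card = k ^ t := by
          rw [hBP]; exact filter_div_card k m t hk0 ht i
        have hcardsplit := Finset.card_filter_add_card_filter_not
          (s := B) (p := fun u : Fin (k ^ m) => (u : ℕ) / k ^ t = (i : ℕ) / k ^ t)
        have hcard3 : (B.filter (fun u : Fin (k ^ m) => ¬ (u : ℕ) / k ^ t = (i : ℕ) / k ^ t)).card
            = k ^ (t + 1) - k ^ t := by omega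
        have hsum2 : ∑ u ∈ B.filter (fun u : Fin (k ^ m) => ¬ (u : ℕ) / k ^ t = (i : ℕ) / k ^ t), D i u
            = ((k ^ (t + 1) - k ^ t : ℕ) : ℝ) * (σ ^ 2 * ρ * (Q / (k : ℝ)) ^ t) := by
          have hvals : ∀ u ∈ B.filter (fun u : Fin (k ^ m) => ¬ (u : ℕ) / k ^ t = (i : ℕ) / k ^ t),
              D i u = σ ^ 2 * ρ * (Q / (k : ℝ)) ^ t := by
            intro u hu
            simp only [hB, Finset.mem_filter, Finset.mem_univ, true_and] at hu
            exact stepA i u hu.1.symm (fun h => hu.2 h.symm)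
          rw [Finset.sum_congr rfl hvals, Finset.sum_const, hcard3, nsmul_eq_mul]
        rw [← hsplit, hsum1, hsum2]
        have hle : k ^ t ≤ k ^ (t + 1) := Nat.pow_le_pow_right hk0 (Nat.le_succ t)
        have hcast : ((k ^ (t + 1) - k ^ t : ℕ) : ℝ) = (k : ℝ) ^ (t + 1) - (k : ℝ) ^ t := by
          rw [Nat.cast_sub hle]; push_cast; ring
        rw [hcast, div_pow, hQ]
        field_simp
        ring
  ext i j
  exact (key m le_rfl).1 i j (by rw [Nat.div_eq_of_lt i.isLt, Nat.div_eq_of_lt j.isLt])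
end

section
/- (Thin trees diversify better than fat trees.) Let k, k', m, m' be positive integers with 2 ≤ k < k' and k^m = k'^{m'}, and let ρ ∈ (0,1). Then DB(k',m',ρ) < DB(k,m,ρ); equivalently, (1/k' + (1 − 1/k')ρ)^{m'/2} > (1/k + (1 − 1/k)ρ)^{m/2}. Thus, among regular Gaussian trees with the same total number N = k^m of individual risks and the same dependency parameter ρ, the tree with larger branching width k has a strictly smaller diversification benefit. -/
/-- Thin trees diversify better than fat trees: for regular Gaussian trees with the same number
`N = k^m = k'^m'` of individual risks and the same dependency `ρ ∈ (0,1)`, if `k < k'` then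
`DB(k',m',ρ) < DB(k,m,ρ)`, where `DB(k,m,ρ) = 1 - (1/k + (1 - 1/k)ρ)^(m/2)`. -/
theorem thin_trees_diversify_better (k k' m m' : ℕ) (hk : 2 ≤ k) (hkk' : k < k')
    (hm : 1 ≤ m) (hm' : 1 ≤ m') (hN : k ^ m = k' ^ m') (ρ : ℝ) (hρ0 : 0 < ρ) (hρ1 : ρ < 1) :
    1 - (1 / (k' : ℝ) + (1 - 1 / (k' : ℝ)) * ρ) ^ ((m' : ℝ) / 2)
      < 1 - (1 / (k : ℝ) + (1 - 1 / (k : ℝ)) * ρ) ^ ((m : ℝ) / 2) := by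
  have hkR : (2:ℝ) ≤ (k:ℝ) := by exact_mod_cast hk
  have hk'R : (k:ℝ) < (k':ℝ) := by exact_mod_cast hkk'
  have hk0 : (0:ℝ) < k := by linarith
  have hk'0 : (0:ℝ) < k' := by linarith
  have hk1 : (1:ℝ) < k := by linarith
  have hk'1 : (1:ℝ) < k' := by linarith
  have hlk : 0 < Real.log k := Real.log_pos hk1
  have hlk' : 0 < Real.log k' := Real.log_pos hk'1
  set t : ℝ := Real.log k' / Real.log k with ht
  have ht1 : 1 < t := (one_lt_div hlk).2 (Real.log_lt_log hk0 hk'R)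
  have ht0 : 0 < t := by linarith
  -- k ^ t = k'
  have hkt : (k:ℝ) ^ t = (k':ℝ) := by
    rw [Real.rpow_def_of_pos hk0, ht, mul_div_cancel₀ _ (ne_of_gt hlk),
      Real.exp_log hk'0]
  set u : ℝ := 1 / (k:ℝ) with hu
  have hu0 : 0 < u := by positivity
  have hu1 : u < 1 := by rw [hu]; rw [div_lt_one hk0]; exact hk1
  have hut : u ^ t = 1 / (k':ℝ) := by
    rw [hu, Real.div_rpow zero_le_one (le_of_lt hk0), Real.one_rpow, hkt]
  set a : ℝ := 1 / (k:ℝ) + (1 - 1 / (k:ℝ)) * ρ with ha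
  set b : ℝ := 1 / (k':ℝ) + (1 - 1 / (k':ℝ)) * ρ with hb
  have ha' : a = (1 - ρ) * u + ρ * 1 := by rw [ha, hu]; ring
  have hb' : b = (1 - ρ) * (u ^ t) + ρ * 1 := by
    rw [hb, ← hut]; ring
  have ha0 : 0 < a := by rw [ha']; nlinarith
  have ha1 : a < 1 := by rw [ha']; nlinarith
  have hb0 : 0 < b := by
    rw [hb']
    have : 0 < u ^ t := Real.rpow_pos_of_pos hu0 t
    nlinarith
  -- strict convexity of rpow
  have hconv := (strictConvexOn_rpow ht1).2 (Set.mem_Ici.2 (le_of_lt hu0))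
    (Set.mem_Ici.2 zero_le_one) (ne_of_lt hu1) (by linarith : (0:ℝ) < 1 - ρ) hρ0
    (by ring : (1 - ρ) + ρ = 1)
  simp only [smul_eq_mul, Real.one_rpow, mul_one] at hconv
  have hab : a ^ t < b := by
    rw [ha', hb']
    simpa using hconv
  -- logs
  have hlog : t * Real.log a < Real.log b := by
    have := Real.log_lt_log (Real.rpow_pos_of_pos ha0 t) hab
    rwa [Real.log_rpow ha0] at this
  have hla : Real.log a < 0 := Real.log_neg ha0 ha1
  -- m log k = m' log k'
  have hNR : ((k:ℝ)) ^ (m:ℕ) = ((k':ℝ)) ^ (m':ℕ) := by exact_mod_cast hN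
  have hL : (m:ℝ) * Real.log k = (m':ℝ) * Real.log k' := by
    have := congrArg Real.log hNR
    rwa [Real.log_pow, Real.log_pow] at this
  have hm't : (m':ℝ) * t = m := by
    rw [ht]
    field_simp
    linarith [hL]
  have hm'0 : (0:ℝ) < m' := by exact_mod_cast hm'
  have key : (m:ℝ) / 2 * Real.log a < (m':ℝ) / 2 * Real.log b := by
    have h1 : (m':ℝ) / 2 * (t * Real.log a) < (m':ℝ) / 2 * Real.log b :=
      mul_lt_mul_of_pos_left hlog (by positivity)
    calc (m:ℝ) / 2 * Real.log a = (m':ℝ) / 2 * (t * Real.log a) := by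
          rw [← hm't]; ring
      _ < (m':ℝ) / 2 * Real.log b := h1
  have : a ^ ((m:ℝ)/2) < b ^ ((m':ℝ)/2) := by
    rw [Real.rpow_def_of_pos ha0, Real.rpow_def_of_pos hb0]
    exact Real.exp_lt_exp.2 (by rw [mul_comm, mul_comm (Real.log b)]; exact key)
  linarith
end

section
/- Fix ρ ∈ (0,1). The function h(x) = ln(ρ + (1 − ρ)/x) / ln x is strictly increasing on the interval (1, ∞). Equivalently, for all reals x' > x > 1: ln((1 − ρ)/x + ρ) − (ln x / ln x') · ln((1 − ρ)/x' + ρ) < 0. (This is the key inequality in the proof that thin trees diversify better than fat trees.) -/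
/-!
Put `t = log x / log x' = logb x' x ∈ (0, 1)`, so that `1/x = (1/x')^t`. Strict concavity of
`y ↦ y^t` at the points `1` and `1/x'` with weights `ρ`, `1 - ρ` gives
`ρ + (1-ρ)/x < (ρ + (1-ρ)/x')^t`; taking logarithms yields
`log (ρ + (1-ρ)/x) < t · log (ρ + (1-ρ)/x')`, which is both claims after dividing by `log x`.
-/

open Real Set

lemma add_mul_rpow_lt_rpow_add_mul {a b t y : ℝ} (ha : 0 < a) (hb : 0 < b) (hab : a + b = 1)
    (ht0 : 0 < t) (ht1 : t < 1) (hy : 0 ≤ y) (hy1 : y ≠ 1) :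
    a + b * y ^ t < (a + b * y) ^ t := by
  simpa using (strictConcaveOn_rpow ht0 ht1).2 (mem_Ici.2 zero_le_one) (mem_Ici.2 hy)
    hy1.symm ha hb hab

lemma log_add_div_lt_logb_mul_log_add_div {ρ x x' : ℝ} (hρ0 : 0 < ρ) (hρ1 : ρ < 1) (hx : 1 < x)
    (hxx' : x < x') :
    log (ρ + (1 - ρ) / x) < logb x' x * log (ρ + (1 - ρ) / x') := by
  have hx' : 1 < x' := hx.trans hxx'
  have hx0 : 0 < x := one_pos.trans hx
  have hx'0 : 0 < x' := one_pos.trans hx'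
  have h1ρ : 0 < 1 - ρ := sub_pos.2 hρ1
  have ht0 : 0 < logb x' x := logb_pos hx' hx
  have ht1 : logb x' x < 1 := by
    rw [← logb_self_eq_one hx']
    exact logb_lt_logb hx' hx0 hxx'
  have hpow : x'⁻¹ ^ logb x' x = x⁻¹ := by
    rw [inv_rpow hx'0.le, rpow_logb hx'0 hx'.ne' hx0]
  have hconcave := add_mul_rpow_lt_rpow_add_mul hρ0 h1ρ (add_sub_cancel ρ 1) ht0
    ht1 (inv_nonneg.2 hx'0.le) (inv_ne_one.2 hx'.ne')
  rw [hpow] at hconcave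
  rw [div_eq_mul_inv, div_eq_mul_inv, ← log_rpow (by positivity)]
  exact log_lt_log (by positivity) hconcave

/-- The key inequality in the proof that thin trees diversify better than fat trees: for fixed
`ρ ∈ (0,1)`, the function `h(x) = ln(ρ + (1-ρ)/x) / ln x` is strictly increasing on `(1, ∞)`;
equivalently, for `x' > x > 1`,
`ln((1-ρ)/x + ρ) - (ln x / ln x')·ln((1-ρ)/x' + ρ) < 0`. -/
theorem log_ratio_strictMono (ρ : ℝ) (hρ0 : 0 < ρ) (hρ1 : ρ < 1) :
    StrictMonoOn (fun x : ℝ => Real.log (ρ + (1 - ρ) / x) / Real.log x) (Set.Ioi 1) ∧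
    ∀ x x' : ℝ, 1 < x → x < x' →
      Real.log ((1 - ρ) / x + ρ) - Real.log x / Real.log x' * Real.log ((1 - ρ) / x' + ρ)
        < 0 := by
  have key : ∀ x x' : ℝ, 1 < x → x < x' →
      log (ρ + (1 - ρ) / x) < log x / log x' * log (ρ + (1 - ρ) / x') :=
    fun _ _ hx hxx' ↦ log_add_div_lt_logb_mul_log_add_div hρ0 hρ1 hx hxx'
  refine ⟨fun x hx x' _ hxx' ↦ ?_, fun x x' hx hxx' ↦ ?_⟩
  · rw [mem_Ioi] at hx
    rw [div_lt_iff₀ (log_pos hx)]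
    calc _ < _ := key x x' hx hxx'
      _ = _ := by ring
  · rw [add_comm _ ρ, add_comm _ ρ, sub_neg]
    exact key x x' hx hxx'
end

section
/- Let k ≥ 2 and m ≥ 2 be integers and ρ ∈ (0,1). Then DB(k,m,ρ) > DB(k^m, 1, ρ); explicitly, 1 − (1/k + (1 − 1/k)ρ)^{m/2} > 1 − (k^{−m} + (1 − k^{−m})ρ)^{1/2}. In words: the hierarchical regular (k,m) Gaussian tree has a strictly larger diversification benefit than the flat (one-level) tree aggregating the same N = k^m individual risks directly with the same dependency parameter ρ. -/
/-!
Write `V x = x + (1 - x) ρ`, so that `DB(n, 1, ρ) = 1 - √(V (1/n))`. The defect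
`V (x y) - V x * V y = ρ (1 - ρ) (1 - x) (1 - y)` is positive for `x, y < 1`, hence by induction
`V (1/k) ^ m < V (1/k ^ m)` for `m ≥ 2`, and taking square roots gives the claim.
-/

/-- For `x = 1/n` this is the variance of the mean of `n` standard Gaussians with pairwise
correlation `ρ`. -/
def meanVariance (ρ x : ℝ) : ℝ := x + (1 - x) * ρ

section

variable {ρ : ℝ}

theorem meanVariance_mul_sub_mul (ρ x y : ℝ) :
    meanVariance ρ (x * y) - meanVariance ρ x * meanVariance ρ y
      = ρ * (1 - ρ) * (1 - x) * (1 - y) := by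
  unfold meanVariance
  ring

theorem meanVariance_pos (hρ0 : 0 < ρ) (hρ1 : ρ ≤ 1) {x : ℝ} (hx : 0 ≤ x) :
    0 < meanVariance ρ x := by
  unfold meanVariance
  nlinarith

theorem meanVariance_mul_lt (hρ0 : 0 < ρ) (hρ1 : ρ < 1) {x y : ℝ} (hx : x < 1) (hy : y < 1) :
    meanVariance ρ x * meanVariance ρ y < meanVariance ρ (x * y) := by
  have hdefect : 0 < ρ * (1 - ρ) * (1 - x) * (1 - y) := by
    have := sub_pos.2 hρ1; have := sub_pos.2 hx; have := sub_pos.2 hy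
    positivity
  linarith [meanVariance_mul_sub_mul ρ x y]

theorem meanVariance_pow_lt (hρ0 : 0 < ρ) (hρ1 : ρ < 1) {c : ℝ} (hc0 : 0 ≤ c) (hc1 : c < 1)
    {m : ℕ} (hm : 2 ≤ m) : meanVariance ρ c ^ m < meanVariance ρ (c ^ m) := by
  induction m, hm using Nat.le_induction with
  | base => simpa only [pow_two] using meanVariance_mul_lt hρ0 hρ1 hc1 hc1
  | succ n hn ih =>
    calc meanVariance ρ c ^ (n + 1) = meanVariance ρ c ^ n * meanVariance ρ c := pow_succ _ _
      _ < meanVariance ρ (c ^ n) * meanVariance ρ c :=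
          mul_lt_mul_of_pos_right ih (meanVariance_pos hρ0 hρ1.le hc0)
      _ < meanVariance ρ (c ^ n * c) :=
          meanVariance_mul_lt hρ0 hρ1 (pow_lt_one₀ hc0 hc1 (by omega)) hc1
      _ = meanVariance ρ (c ^ (n + 1)) := by rw [pow_succ]

end

/-- The hierarchical regular `(k,m)` Gaussian tree (`k ≥ 2`, `m ≥ 2`) has a strictly larger
diversification benefit than the flat (one-level) tree aggregating the same `N = k^m` individual
risks directly with the same dependency parameter `ρ ∈ (0,1)`:
`1 - (1/k + (1 - 1/k)ρ)^(m/2) > 1 - (k^(-m) + (1 - k^(-m))ρ)^(1/2)`. -/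
theorem hierarchical_beats_flat (k m : ℕ) (hk : 2 ≤ k) (hm : 2 ≤ m) (ρ : ℝ)
    (hρ0 : 0 < ρ) (hρ1 : ρ < 1) :
    1 - (1 / (k : ℝ) + (1 - 1 / (k : ℝ)) * ρ) ^ ((m : ℝ) / 2)
      > 1 - (((k : ℝ) ^ m)⁻¹ + (1 - ((k : ℝ) ^ m)⁻¹) * ρ) ^ ((1 : ℝ) / 2) := by
  have hk1 : (1 : ℝ) < k := by exact_mod_cast hk
  have hc1 : 1 / (k : ℝ) < 1 := (div_lt_one (by linarith)).2 hk1
  have hcm : ((k : ℝ) ^ m)⁻¹ = (1 / (k : ℝ)) ^ m := by rw [one_div, inv_pow]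
  have hV := meanVariance_pos hρ0 hρ1.le (x := 1 / (k : ℝ)) (by positivity)
  have hpow := meanVariance_pow_lt hρ0 hρ1 (by positivity) hc1 hm
  have hsqrt : (meanVariance ρ (1 / k)) ^ ((m : ℝ) / 2)
      < meanVariance ρ ((1 / (k : ℝ)) ^ m) ^ ((1 : ℝ) / 2) := by
    rw [div_eq_mul_one_div (m : ℝ), Real.rpow_natCast_mul hV.le]
    exact Real.rpow_lt_rpow (by positivity) hpow (by norm_num)
  rw [hcm]
  exact sub_lt_sub_left hsqrt 1
end

section
/- Let k ≥ 2 and m ≥ 1 be integers and consider the diversification factor η(ρ) = ((k + (k² − k)ρ)^{m/2} − k^{m/2}) / (k^m − k^{m/2}) as a function of ρ on the interval (−1/(k−1), 1). Then: if m = 1, η is strictly concave; if m = 2, η(ρ) = ρ (η is affine); and if m ≥ 3, η is strictly convex. (Convexity of η for deep trees expresses that hierarchical trees keep a high diversification — small η — even for large values of the dependency parameter ρ.) -/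
/-! On `(-1/(k-1), 1)` the base `k + (k² - k) ρ` is a nonnegative, non-constant affine function
of `ρ`, and the denominator `k^m - k^(m/2)` is positive. So `η` is `t ↦ t^(m/2)` on `[0, ∞)`
precomposed with an injective affine map and followed by an increasing affine map, which preserves
strict convexity and concavity; and `t ↦ t^p` is strictly concave for `0 < p < 1`, the identity
for `p = 1`, and strictly convex for `p > 1`. -/

open Set

section StrictConvexity

variable {𝕜 E F β : Type*}

theorem StrictConvexOn.comp_affineMap [Field 𝕜] [LinearOrder 𝕜] [AddCommGroup E]
    [AddCommGroup F] [Module 𝕜 E] [Module 𝕜 F] [AddCommMonoid β] [PartialOrder β] [SMul 𝕜 β]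
    {f : F → β} {g : E →ᵃ[𝕜] F} (hg : Function.Injective g) {s : Set F}
    (hf : StrictConvexOn 𝕜 s f) : StrictConvexOn 𝕜 (g ⁻¹' s) (f ∘ g) :=
  ⟨hf.1.affine_preimage _, fun x hx y hy hxy a b ha hb hab =>
    calc
      (f ∘ g) (a • x + b • y) = f (a • g x + b • g y) := by
        rw [Function.comp_apply, Convex.combo_affine_apply hab]
      _ < a • f (g x) + b • f (g y) := hf.2 hx hy (hg.ne hxy) ha hb hab⟩

theorem StrictConvexOn.smul [CommSemiring 𝕜] [PartialOrder 𝕜] [AddCommMonoid E]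
    [AddCommMonoid β] [PartialOrder β] [SMul 𝕜 E] [Module 𝕜 β] [PosSMulStrictMono 𝕜 β]
    {s : Set E} {f : E → β} {c : 𝕜} (hc : 0 < c) (hf : StrictConvexOn 𝕜 s f) :
    StrictConvexOn 𝕜 s fun x => c • f x :=
  ⟨hf.1, fun x hx y hy hxy a b ha hb hab =>
    calc
      c • f (a • x + b • y) < c • (a • f x + b • f y) :=
        smul_lt_smul_of_pos_left (hf.2 hx hy hxy ha hb hab) hc
      _ = a • c • f x + b • c • f y := by rw [smul_add, smul_comm c, smul_comm c]⟩

end StrictConvexity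

section AffineReparam

variable {A B c d : ℝ} {t : Set ℝ} {f : ℝ → ℝ}

theorem StrictConvexOn.comp_affine_sub_div (hf : StrictConvexOn ℝ t f) (hB : B ≠ 0)
    (hd : 0 < d) : StrictConvexOn ℝ {ρ | A + B * ρ ∈ t} fun ρ => (f (A + B * ρ) - c) / d := by
  set g := AffineMap.lineMap (k := ℝ) A (A + B)
  have hg (ρ : ℝ) : g ρ = A + B * ρ := by
    rw [AffineMap.lineMap_apply_ring']; ring
  have hinj : Function.Injective g := AffineMap.lineMap_injective ℝ (by simpa using hB)
  have h := ((hf.comp_affineMap hinj).smul (inv_pos.2 hd)).add_const (-(c / d))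
  rw [show g ⁻¹' t = {ρ | A + B * ρ ∈ t} by ext ρ; simp [hg]] at h
  refine h.congr fun ρ _ => ?_
  simp only [Pi.add_apply, Function.comp_apply, hg, smul_eq_mul]
  ring

theorem StrictConcaveOn.comp_affine_sub_div (hf : StrictConcaveOn ℝ t f) (hB : B ≠ 0)
    (hd : 0 < d) : StrictConcaveOn ℝ {ρ | A + B * ρ ∈ t} fun ρ => (f (A + B * ρ) - c) / d := by
  rw [← neg_strictConvexOn_iff] at hf ⊢
  refine (hf.comp_affine_sub_div (c := -c) hB hd).congr fun ρ _ => ?_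
  simp only [Pi.neg_apply]
  ring

end AffineReparam

lemma add_sq_sub_mul_pos_of_neg_inv_lt {x ρ : ℝ} (hx : 1 < x) (hρ : -(1 / (x - 1)) < ρ) :
    0 < x + (x ^ 2 - x) * ρ := by
  have hx1 : 0 < x - 1 := sub_pos.2 hx
  have h : -1 < (x - 1) * ρ := by
    have := mul_lt_mul_of_pos_left hρ hx1
    rwa [mul_neg, mul_one_div_cancel hx1.ne'] at this
  calc (0 : ℝ) < x * (1 + (x - 1) * ρ) := mul_pos (by linarith) (by linarith)
    _ = x + (x ^ 2 - x) * ρ := by ring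

lemma rpow_div_two_lt_pow {x : ℝ} (hx : 1 < x) {m : ℕ} (hm : 0 < m) :
    x ^ ((m : ℝ) / 2) < x ^ m := by
  rw [← Real.rpow_natCast, Real.rpow_lt_rpow_left_iff hx]
  have : (0 : ℝ) < m := Nat.cast_pos.2 hm
  linarith

theorem eta_concave_affine_convex_general (k m : ℕ) (hk : 2 ≤ k) :
    (m = 1 → StrictConcaveOn ℝ (Set.Ioo (-(1 / ((k : ℝ) - 1))) 1)
      (fun ρ : ℝ =>
        (((k : ℝ) + ((k : ℝ) ^ 2 - (k : ℝ)) * ρ) ^ ((m : ℝ) / 2) - (k : ℝ) ^ ((m : ℝ) / 2)) /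
          ((k : ℝ) ^ m - (k : ℝ) ^ ((m : ℝ) / 2)))) ∧
    (m = 2 → ∀ ρ ∈ Set.Ioo (-(1 / ((k : ℝ) - 1))) (1 : ℝ),
        (((k : ℝ) + ((k : ℝ) ^ 2 - (k : ℝ)) * ρ) ^ ((m : ℝ) / 2) - (k : ℝ) ^ ((m : ℝ) / 2)) /
          ((k : ℝ) ^ m - (k : ℝ) ^ ((m : ℝ) / 2)) = ρ) ∧
    (3 ≤ m → StrictConvexOn ℝ (Set.Ioo (-(1 / ((k : ℝ) - 1))) 1)
      (fun ρ : ℝ =>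
        (((k : ℝ) + ((k : ℝ) ^ 2 - (k : ℝ)) * ρ) ^ ((m : ℝ) / 2) - (k : ℝ) ^ ((m : ℝ) / 2)) /
          ((k : ℝ) ^ m - (k : ℝ) ^ ((m : ℝ) / 2)))) := by
  have hk1 : (1 : ℝ) < k := by exact_mod_cast hk
  have hB : (k : ℝ) ^ 2 - k ≠ 0 := by nlinarith
  have hdom : Ioo (-(1 / ((k : ℝ) - 1))) 1 ⊆ {ρ | (k : ℝ) + ((k : ℝ) ^ 2 - k) * ρ ∈ Ici 0} :=
    fun ρ hρ => (add_sq_sub_mul_pos_of_neg_inv_lt hk1 hρ.1).le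
  have hden (hm : 0 < m) : 0 < (k : ℝ) ^ m - (k : ℝ) ^ ((m : ℝ) / 2) :=
    sub_pos.2 (rpow_div_two_lt_pow hk1 hm)
  refine ⟨fun hm => ?_, fun hm ρ _ => ?_, fun hm => ?_⟩
  · subst hm
    exact ((Real.strictConcaveOn_rpow (by norm_num) (by norm_num)).comp_affine_sub_div hB
      (hden one_pos)).subset hdom (convex_Ioo _ _)
  · subst hm
    rw [show ((2 : ℕ) : ℝ) / 2 = 1 by norm_num, Real.rpow_one, Real.rpow_one, add_sub_cancel_left,
      mul_div_cancel_left₀ _ hB]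
  · exact ((strictConvexOn_rpow (by rify at hm; linarith)).comp_affine_sub_div hB
      (hden (by omega))).subset hdom (convex_Ioo _ _)

/-- Shape of the diversification factor `η(ρ) = ((k + (k² - k)ρ)^(m/2) - k^(m/2)) / (k^m - k^(m/2))`
of the regular `(k,m)` Gaussian tree, as a function of `ρ` on `(-1/(k-1), 1)`:
for `m = 1` it is strictly concave, for `m = 2` it is the identity `η(ρ) = ρ`, and for `m ≥ 3`
it is strictly convex. -/
theorem eta_concave_affine_convex (k m : ℕ) (hk : 2 ≤ k) (hm : 1 ≤ m) :
    (m = 1 → StrictConcaveOn ℝ (Set.Ioo (-(1 / ((k : ℝ) - 1))) 1)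
      (fun ρ : ℝ =>
        (((k : ℝ) + ((k : ℝ) ^ 2 - (k : ℝ)) * ρ) ^ ((m : ℝ) / 2) - (k : ℝ) ^ ((m : ℝ) / 2)) /
          ((k : ℝ) ^ m - (k : ℝ) ^ ((m : ℝ) / 2)))) ∧
    (m = 2 → ∀ ρ ∈ Set.Ioo (-(1 / ((k : ℝ) - 1))) (1 : ℝ),
        (((k : ℝ) + ((k : ℝ) ^ 2 - (k : ℝ)) * ρ) ^ ((m : ℝ) / 2) - (k : ℝ) ^ ((m : ℝ) / 2)) /
          ((k : ℝ) ^ m - (k : ℝ) ^ ((m : ℝ) / 2)) = ρ) ∧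
    (3 ≤ m → StrictConvexOn ℝ (Set.Ioo (-(1 / ((k : ℝ) - 1))) 1)
      (fun ρ : ℝ =>
        (((k : ℝ) + ((k : ℝ) ^ 2 - (k : ℝ)) * ρ) ^ ((m : ℝ) / 2) - (k : ℝ) ^ ((m : ℝ) / 2)) /
          ((k : ℝ) ^ m - (k : ℝ) ^ ((m : ℝ) / 2)))) :=
  eta_concave_affine_convex_general k m hk
end
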